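/- arXiv:1208.3594 — 6 statements merged into one kernel-verified Lean document; each statement's English description precedes it below -/
import Mathlib

section
/- Let m and n be positive integers with m > 1, n squarefree and m ∣ n, and let s be an integer with s² < 4·m and n ∣ 4·m − s². Then n = m or n = 2·m. -/
/-!
Write `n = m k` and `4m - s² = n c`. Then `s² = m (4 - k c)` with `0 < k c ≤ 4`, so `k ≤ 4`.
The cofactor `k` divides the squarefree `n`, which rules out `k = 4`; and `k = 3` forces
`c = 1`, i.e. `m = s²`, impossible for a squarefree `m > 1`.
-/

theorem isUnit_of_squarefree_sq {R : Type*} [Monoid R] {x : R} (h : Squarefree (x ^ 2)) :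
    IsUnit x :=
  h x (sq x).symm.dvd

theorem Nat.eq_one_of_squarefree_of_cast_eq_sq {m : ℕ} (hm : Squarefree m) {s : ℤ}
    (h : (m : ℤ) = s ^ 2) : m = 1 := by
  have hs : IsUnit s := isUnit_of_squarefree_sq (h ▸ Int.squarefree_natCast.mpr hm)
  exact_mod_cast h.trans (Int.isUnit_sq hs)

theorem Int.exists_sq_eq_mul_four_sub {m k s : ℤ} (hm : 0 < m) (hk : 0 < k)
    (hs : s ^ 2 < 4 * m) (h : m * k ∣ 4 * m - s ^ 2) :
    ∃ c : ℤ, 0 < c ∧ k * c ≤ 4 ∧ s ^ 2 = m * (4 - k * c) := by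
  obtain ⟨c, hc⟩ := h
  have hc_pos : 0 < c := pos_of_mul_pos_right (by linarith) (mul_pos hm hk).le
  have hsq : s ^ 2 = m * (4 - k * c) := by linear_combination -hc
  refine ⟨c, hc_pos, ?_, hsq⟩
  have : 0 ≤ 4 - k * c := nonneg_of_mul_nonneg_right (hsq ▸ sq_nonneg s) hm
  linarith

theorem Nat.cofactor_eq_one_or_two {m k : ℕ} (hm : 1 < m) (hsq : Squarefree (m * k)) {s : ℤ}
    (hs : s ^ 2 < 4 * (m : ℤ)) (hdvd : ((m * k : ℕ) : ℤ) ∣ 4 * (m : ℤ) - s ^ 2) :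
    k = 1 ∨ k = 2 := by
  have hk_sq : Squarefree k := hsq.of_mul_right
  have hk : 0 < k := Nat.pos_of_ne_zero hk_sq.ne_zero
  push_cast at hdvd
  obtain ⟨c, hc, hkc, hsm⟩ := Int.exists_sq_eq_mul_four_sub (by omega) (by omega) hs hdvd
  have hk4 : k ≤ 4 := by
    have : (k : ℤ) ≤ 4 := by nlinarith
    omega
  interval_cases k
  · exact .inl rfl
  · exact .inr rfl
  · have hm_sq : (m : ℤ) = s ^ 2 := by
      obtain rfl : c = 1 := by omega
      push_cast at hsm
      linarith
    have := Nat.eq_one_of_squarefree_of_cast_eq_sq hsq.of_mul_left hm_sq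
    omega
  · exact absurd hk_sq (by decide)

theorem stmt_0_general (m n : ℕ) (hm : 1 < m) (hsq : Squarefree n) (hmn : m ∣ n)
    (s : ℤ) (hs : s ^ 2 < 4 * (m : ℤ)) (hdvd : (n : ℤ) ∣ 4 * (m : ℤ) - s ^ 2) :
    n = m ∨ n = 2 * m := by
  obtain ⟨k, rfl⟩ := hmn
  rcases Nat.cofactor_eq_one_or_two hm hsq hs hdvd with rfl | rfl
  · exact .inl (mul_one m)
  · exact .inr (mul_comm m 2)

/-- Let `m` and `n` be positive integers with `m > 1`, `n` squarefree and `m ∣ n`,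
and let `s` be an integer with `s² < 4·m` and `n ∣ 4·m − s²`.
Then `n = m` or `n = 2·m`. -/
theorem stmt_0 (m n : ℕ) (hm : 1 < m) (hn : 0 < n) (hsq : Squarefree n) (hmn : m ∣ n)
    (s : ℤ) (hs : s ^ 2 < 4 * (m : ℤ)) (hdvd : (n : ℤ) ∣ 4 * (m : ℤ) - s ^ 2) :
    n = m ∨ n = 2 * m :=
  stmt_0_general m n hm hsq hmn s hs hdvd
end

section
/- Let m and n be positive integers with m > 1, n squarefree and m ∣ n, and let t be an integer with t² < 3·m and n ∣ 3·m − t². Then n = m or n = 3·m. -/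
/-!
Since `m ∣ n ∣ 3m - t²` and `m` is squarefree, `m ∣ t`; write `t = m u` and `n = m k`. Then
`k ∣ 3 - m u²`, a positive number because `t² < 3m`. As `m > 1`, the product `m u²` is either
`0` or at least `2`, so `3 - m u²` is `3` or `1`, whence `k ∣ 3` and `n ∈ {m, 3m}`.
-/

theorem Squarefree.dvd_of_dvd_mul_sub_sq {m : ℤ} (hm : Squarefree m) {a t : ℤ}
    (h : m ∣ a * m - t ^ 2) : m ∣ t := by
  have hsq : m ∣ t ^ 2 := by
    simpa using dvd_sub (dvd_mul_left m a) h
  exact (hm.dvd_pow_iff_dvd two_ne_zero).mp hsq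

theorem three_sub_mul_sq_eq_one_or_three {m u : ℤ} (hm : 1 < m) (hpos : 0 < 3 - m * u ^ 2) :
    3 - m * u ^ 2 = 1 ∨ 3 - m * u ^ 2 = 3 := by
  rcases eq_or_ne u 0 with rfl | hu
  · right; ring
  · left
    have hu2 : 0 < u ^ 2 := by positivity
    nlinarith

theorem stmt_1_general (m n : ℕ) (hm : 1 < m) (hsq : Squarefree n) (hmn : m ∣ n)
    (t : ℤ) (ht : t ^ 2 < 3 * (m : ℤ)) (hdvd : (n : ℤ) ∣ 3 * (m : ℤ) - t ^ 2) :
    n = m ∨ n = 3 * m := by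
  have hmn' : (m : ℤ) ∣ n := Int.natCast_dvd_natCast.mpr hmn
  have hmsq : Squarefree (m : ℤ) := Int.squarefree_natCast.mpr (hsq.squarefree_of_dvd hmn)
  obtain ⟨u, rfl⟩ := hmsq.dvd_of_dvd_mul_sub_sq (hmn'.trans (by rwa [mul_comm] at hdvd))
  obtain ⟨k, rfl⟩ := hmn
  have hm0 : (0 : ℤ) < m := by exact_mod_cast Nat.zero_lt_of_lt hm
  have hk : (k : ℤ) ∣ 3 - m * u ^ 2 := by
    rw [Nat.cast_mul, show 3 * (m : ℤ) - (m * u) ^ 2 = m * (3 - m * u ^ 2) by ring] at hdvd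
    exact (mul_dvd_mul_iff_left hm0.ne').mp hdvd
  have hpos : 0 < 3 - (m : ℤ) * u ^ 2 := by
    have : (m : ℤ) * (m * u ^ 2) < m * 3 := by linear_combination ht
    linarith [lt_of_mul_lt_mul_left this hm0.le]
  have hk3 : k ∣ 3 := by
    have : (k : ℤ) ∣ 3 := by
      rcases three_sub_mul_sq_eq_one_or_three (by exact_mod_cast hm) hpos with h | h
      · exact (h ▸ hk).trans (one_dvd 3)
      · exact h ▸ hk
    exact_mod_cast this
  rcases Nat.prime_three.eq_one_or_self_of_dvd k hk3 with rfl | rfl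
  · left; ring
  · right; ring

/-- Let `m` and `n` be positive integers with `m > 1`, `n` squarefree and `m ∣ n`,
and let `t` be an integer with `t² < 3·m` and `n ∣ 3·m − t²`.
Then `n = m` or `n = 3·m`. -/
theorem stmt_1 (m n : ℕ) (hm : 1 < m) (hn : 0 < n) (hsq : Squarefree n) (hmn : m ∣ n)
    (t : ℤ) (ht : t ^ 2 < 3 * (m : ℤ)) (hdvd : (n : ℤ) ∣ 3 * (m : ℤ) - t ^ 2) :
    n = m ∨ n = 3 * m :=
  stmt_1_general m n hm hsq hmn t ht hdvd
end

section
/- Let a and b be positive integers with b ≡ 3 (mod 4). In B = ℍ[ℚ, −a, −b], set e₀ = 1, e₁ = i, e₂ = (1 + j)/2, e₃ = (i + k)/2. Then the ℤ-submodule of B spanned by e₀, e₁, e₂, e₃ contains 1, contains i and j, and is closed under multiplication (so it is a ℤ-order of B), and the determinant of the trace Gram matrix of (e₀, e₁, e₂, e₃) equals −a²·b² (so the order has reduced discriminant a·b). In particular it contains i with i² = −a and j with j² = −b. -/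
open Quaternion

/-- The reduced trace of a quaternion. -/
def trd {c₁ c₂ : ℚ} (x : ℍ[ℚ, c₁, c₂]) : ℚ := 2 * x.re

/-- The trace Gram matrix of a quadruple of quaternions:
its `(r, s)` entry is `trd (e r * e s)`. -/
def traceGram {c₁ c₂ : ℚ} (e : Fin 4 → ℍ[ℚ, c₁, c₂]) : Matrix (Fin 4) (Fin 4) ℚ :=
  Matrix.of fun r s => trd (e r * e s)

/-- The ℤ-submodule spanned by a quadruple of quaternions. -/
def quadSpan {c₁ c₂ : ℚ} (e : Fin 4 → ℍ[ℚ, c₁, c₂]) : Submodule ℤ ℍ[ℚ, c₁, c₂] :=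
  Submodule.span ℤ {e 0, e 1, e 2, e 3}

/-! The ℤ-span of a quadruple `e` is a ring as soon as every product `e r * e s` is an integral
combination of the `e t`. For `1, i, (1 + j)/2, (i + k)/2` in `ℍ[ℚ, c₁, c₂]` these structure
constants are polynomials in `c₁` and `(c₂ - 1)/4`, hence integers when `c₁ ∈ ℤ` and `c₂ ≡ 1 mod 4`,
as for `c₂ = -b` with `b ≡ 3 mod 4`. The Gram determinant is `-c₁²c₂²`: the Gram matrix of
`1, i, j, k` is `diag(2, 2c₁, 2c₂, -2c₁c₂)` and the change of basis has determinant `1/4`. -/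

section

variable {c₁ c₂ : ℚ}

theorem quadSpan_eq_span_range (e : Fin 4 → ℍ[ℚ, c₁, c₂]) :
    quadSpan e = Submodule.span ℤ (Set.range e) := by
  rw [quadSpan]
  congr 1
  ext x
  simp [Fin.exists_fin_succ, eq_comm]

theorem mem_quadSpan (e : Fin 4 → ℍ[ℚ, c₁, c₂]) (r : Fin 4) : e r ∈ quadSpan e := by
  rw [quadSpan_eq_span_range]
  exact Submodule.subset_span ⟨r, rfl⟩

theorem mem_quadSpan_of_eq_sum {e : Fin 4 → ℍ[ℚ, c₁, c₂]} {x : ℍ[ℚ, c₁, c₂]}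
    (u : Fin 4 → ℤ) (hx : x = ∑ r, u r • e r) : x ∈ quadSpan e := by
  rw [quadSpan_eq_span_range, Submodule.mem_span_range_iff_exists_fun]
  exact ⟨u, hx.symm⟩

theorem mul_mem_quadSpan {e : Fin 4 → ℍ[ℚ, c₁, c₂]} (C : Fin 4 → Fin 4 → Fin 4 → ℤ)
    (hC : ∀ r s, e r * e s = ∑ t, C r s t • e t) {x y : ℍ[ℚ, c₁, c₂]}
    (hx : x ∈ quadSpan e) (hy : y ∈ quadSpan e) : x * y ∈ quadSpan e := by
  have hmul : quadSpan e * quadSpan e ≤ quadSpan e := by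
    rw [quadSpan_eq_span_range, Submodule.span_mul_span, Submodule.span_le]
    rintro _ ⟨_, ⟨r, rfl⟩, _, ⟨s, rfl⟩, rfl⟩
    exact (quadSpan_eq_span_range e) ▸ mem_quadSpan_of_eq_sum (C r s) (hC r s)
  exact hmul (Submodule.mul_mem_mul hx hy)

variable (c₁ c₂) in
def halfBasis : Fin 4 → ℍ[ℚ, c₁, c₂] :=
  ![1, ⟨0, 1, 0, 0⟩, (2 : ℚ)⁻¹ • (1 + ⟨0, 0, 1, 0⟩), (2 : ℚ)⁻¹ • (⟨0, 1, 0, 0⟩ + ⟨0, 0, 0, 1⟩)]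

/-- `halfBasisStructConst m n r s` lists the coordinates of `halfBasis r * halfBasis s` when
`c₁ = m` and `c₂ = 4 * n + 1`. -/
def halfBasisStructConst (m n : ℤ) : Fin 4 → Fin 4 → Fin 4 → ℤ :=
  ![![![1, 0, 0, 0], ![0, 1, 0, 0], ![0, 0, 1, 0], ![0, 0, 0, 1]],
    ![![0, 1, 0, 0], ![m, 0, 0, 0], ![0, 0, 0, 1], ![0, 0, m, 0]],
    ![![0, 0, 1, 0], ![0, 1, 0, -1], ![n, 0, 1, 0], ![0, -n, 0, 0]],
    ![![0, 0, 0, 1], ![m, 0, -m, 0], ![0, n, 0, 1], ![-(m * n), 0, 0, 0]]]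

theorem halfBasis_mul_halfBasis (m n : ℤ) (h₁ : c₁ = m) (h₂ : c₂ = 4 * n + 1) (r s : Fin 4) :
    halfBasis c₁ c₂ r * halfBasis c₁ c₂ s =
      ∑ t, halfBasisStructConst m n r s t • halfBasis c₁ c₂ t := by
  subst h₁ h₂
  fin_cases r <;> fin_cases s <;>
    ext <;> simp [halfBasis, halfBasisStructConst, Fin.sum_univ_four] <;> ring

theorem j_mem_quadSpan_halfBasis : (⟨0, 0, 1, 0⟩ : ℍ[ℚ, c₁, c₂]) ∈ quadSpan (halfBasis c₁ c₂) :=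
  mem_quadSpan_of_eq_sum ![-1, 0, 2, 0] <| by
    ext <;> simp [halfBasis, Fin.sum_univ_four, ← Int.cast_smul_eq_zsmul ℚ]

theorem det_traceGram_halfBasis : (traceGram (halfBasis c₁ c₂)).det = -(c₁ ^ 2 * c₂ ^ 2) := by
  have hgram : traceGram (halfBasis c₁ c₂) = !![2, 0, 1, 0; 0, 2 * c₁, 0, c₁;
      1, 0, (1 + c₂) / 2, 0; 0, c₁, 0, c₁ * (1 - c₂) / 2] := by
    ext r s
    fin_cases r <;> fin_cases s <;> simp [traceGram, trd, halfBasis] <;> ring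
  rw [hgram, Matrix.det_succ_row_zero]
  simp [Fin.sum_univ_succ, Matrix.det_fin_three, show (2 : Fin 4).succAbove 2 = 3 by decide]
  ring

end

theorem stmt_3_general (a b : ℕ) (hb4 : b % 4 = 3)
    (i j k : ℍ[ℚ, -(a : ℚ), -(b : ℚ)])
    (hi : i = ⟨0, 1, 0, 0⟩) (hj : j = ⟨0, 0, 1, 0⟩) (hk : k = ⟨0, 0, 0, 1⟩)
    (e : Fin 4 → ℍ[ℚ, -(a : ℚ), -(b : ℚ)])
    (he : e = ![1, i, (2 : ℚ)⁻¹ • (1 + j), (2 : ℚ)⁻¹ • (i + k)]) :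
    (1 : ℍ[ℚ, -(a : ℚ), -(b : ℚ)]) ∈ quadSpan e ∧
    i ∈ quadSpan e ∧
    j ∈ quadSpan e ∧
    (∀ x ∈ quadSpan e, ∀ y ∈ quadSpan e, x * y ∈ quadSpan e) ∧
    (traceGram e).det = -((a : ℚ) ^ 2 * (b : ℚ) ^ 2) ∧
    i ^ 2 = algebraMap ℚ ℍ[ℚ, -(a : ℚ), -(b : ℚ)] (-(a : ℚ)) ∧
    j ^ 2 = algebraMap ℚ ℍ[ℚ, -(a : ℚ), -(b : ℚ)] (-(b : ℚ)) := by
  obtain ⟨q, hq⟩ : ∃ q, b = 4 * q + 3 := ⟨b / 4, by omega⟩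
  have hc₂ : -(b : ℚ) = 4 * ((-(q : ℤ) - 1 : ℤ) : ℚ) + 1 := by rw [hq]; push_cast; ring
  subst hi hj hk he
  refine ⟨mem_quadSpan _ 0, mem_quadSpan _ 1, j_mem_quadSpan_halfBasis,
    fun x hx y hy => mul_mem_quadSpan _ (halfBasis_mul_halfBasis (-a) _ (by simp) hc₂) hx hy,
    by rw [← neg_sq (a : ℚ), ← neg_sq (b : ℚ)]; exact det_traceGram_halfBasis, ?_, ?_⟩
  all_goals rw [sq]; ext <;> simp [QuaternionAlgebra.coe_algebraMap]

/-- For positive integers `a`, `b` with `b ≡ 3 (mod 4)`, in `ℍ[ℚ, −a, −b]` the lattice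
spanned by `1, i, (1+j)/2, (i+k)/2` contains `1`, `i` and `j`, is closed under
multiplication, and its trace Gram matrix has determinant `−a²·b²`; moreover it
contains `i` with `i² = −a` and `j` with `j² = −b`. -/
theorem stmt_3 (a b : ℕ) (ha : 0 < a) (hb : 0 < b) (hb4 : b % 4 = 3)
    (i j k : ℍ[ℚ, -(a : ℚ), -(b : ℚ)])
    (hi : i = ⟨0, 1, 0, 0⟩) (hj : j = ⟨0, 0, 1, 0⟩) (hk : k = ⟨0, 0, 0, 1⟩)
    (e : Fin 4 → ℍ[ℚ, -(a : ℚ), -(b : ℚ)])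
    (he : e = ![1, i, (2 : ℚ)⁻¹ • (1 + j), (2 : ℚ)⁻¹ • (i + k)]) :
    (1 : ℍ[ℚ, -(a : ℚ), -(b : ℚ)]) ∈ quadSpan e ∧
    i ∈ quadSpan e ∧
    j ∈ quadSpan e ∧
    (∀ x ∈ quadSpan e, ∀ y ∈ quadSpan e, x * y ∈ quadSpan e) ∧
    (traceGram e).det = -((a : ℚ) ^ 2 * (b : ℚ) ^ 2) ∧
    i ^ 2 = algebraMap ℚ ℍ[ℚ, -(a : ℚ), -(b : ℚ)] (-(a : ℚ)) ∧
    j ^ 2 = algebraMap ℚ ℍ[ℚ, -(a : ℚ), -(b : ℚ)] (-(b : ℚ)) :=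
  stmt_3_general a b hb4 i j k hi hj hk e he
end

section
/- Let n be a positive integer with n ≡ 2 (mod 4). In B = ℍ[ℚ, −1, −n], set e₀ = 1, e₁ = i, e₂ = (j + k)/2, e₃ = (1 + i + k)/2. Then the ℤ-submodule of B spanned by e₀, e₁, e₂, e₃ contains 1 and is closed under multiplication (so it is a ℤ-order of B), one has e₁² = −1 and e₂² = −n/2, and the determinant of the trace Gram matrix of (e₀, e₁, e₂, e₃) equals −n² (so the order has reduced discriminant n). -/
/-!
Write `ω = (j + k)/2` and `η = (1 + i + k)/2`. In `ℍ[ℚ, -1, c]` the trace Gram matrix of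
`1, i, ω, η` has determinant `-c²` for every `c`, and `i² = -1`, `ω² = c/2` hold identically.
Closure under multiplication only needs the sixteen products of basis elements to lie in the
ℤ-span, and for `c = -n` with `n = 4t + 2` the multiplication table of `1, i, ω, η` has
coefficients in `ℤ[t]`.
-/

open Quaternion

theorem Submodule.mul_mem_span_of_mul_mem {R A : Type*} [CommSemiring R] [Semiring A]
    [Algebra R A] {s : Set A} (hs : ∀ a ∈ s, ∀ b ∈ s, a * b ∈ span R s) {x y : A}
    (hx : x ∈ span R s) (hy : y ∈ span R s) : x * y ∈ span R s := by
  have hle : span R s * span R s ≤ span R s := by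
    rw [span_mul_span, span_le]
    rintro _ ⟨a, ha, b, hb, rfl⟩
    exact hs a ha b hb
  exact hle (mul_mem_mul hx hy)

theorem natCast_eq_of_mod_four_eq_two {n : ℕ} (hn : n % 4 = 2) :
    (n : ℚ) = 4 * (n / 4 : ℕ) + 2 := by
  exact_mod_cast (by omega : n = 4 * (n / 4) + 2)

namespace HurwitzOrder

variable (c : ℚ)

def i : ℍ[ℚ, -1, c] := ⟨0, 1, 0, 0⟩

def ω : ℍ[ℚ, -1, c] := ⟨0, 0, 2⁻¹, 2⁻¹⟩

def η : ℍ[ℚ, -1, c] := ⟨2⁻¹, 2⁻¹, 0, 2⁻¹⟩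

theorem basis_eq :
    ![1, ⟨0, 1, 0, 0⟩, (2 : ℚ)⁻¹ • (⟨0, 0, 1, 0⟩ + ⟨0, 0, 0, 1⟩),
      (2 : ℚ)⁻¹ • (1 + ⟨0, 1, 0, 0⟩ + ⟨0, 0, 0, 1⟩)] = ![1, i c, ω c, η c] := by
  congr <;> ext <;> simp [ω, η]

theorem i_mul_i : i c * i c = -1 := by
  ext <;> simp [i]

theorem ω_sq : ω c ^ 2 = algebraMap ℚ _ (c / 2) := by
  ext <;> simp [sq, ω]
  ring

theorem i_mul_ω : i c * ω c = 2 • η c - 1 - i c - ω c := by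
  ext <;> norm_num [i, ω, η]

theorem i_mul_η : i c * η c = η c - 1 - ω c := by
  ext <;> norm_num [i, ω, η]

theorem ω_mul_i : ω c * i c = 1 + i c + ω c - 2 • η c := by
  ext <;> norm_num [i, ω, η]

theorem η_mul_i : η c * i c = i c + ω c - η c := by
  ext <;> norm_num [i, ω, η]

theorem det_traceGram : (traceGram ![1, i c, ω c, η c]).det = -c ^ 2 := by
  simp [Matrix.det_succ_row_zero, Fin.sum_univ_succ, Fin.succAbove, traceGram, trd, i, ω, η]
  ring

variable {n : ℕ}

-- For `n ≡ 2 (mod 4)`, the natural number `n / 4` below is the `t` of `n = 4t + 2`.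

theorem ω_mul_ω (hn : n % 4 = 2) : ω (-n) * ω (-n) = -((n / 2) • 1) := by
  have hn2 : ((n / 2 : ℕ) : ℚ) = 2 * (n / 4 : ℕ) + 1 := by
    exact_mod_cast (by omega : n / 2 = 2 * (n / 4) + 1)
  ext <;> simp [ω, natCast_eq_of_mod_four_eq_two hn, hn2]
  ring

theorem ω_mul_η (hn : n % 4 = 2) :
    ω (-n) * η (-n) = (n / 4 + 1) • i (-n) + ω (-n) - η (-n) - (n / 4) • 1 := by
  ext <;> simp [i, ω, η, natCast_eq_of_mod_four_eq_two hn] <;> ring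

theorem η_mul_ω (hn : n % 4 = 2) :
    η (-n) * ω (-n) = η (-n) - (n / 4 + 1) • 1 - (n / 4 + 1) • i (-n) := by
  ext <;> simp [i, ω, η, natCast_eq_of_mod_four_eq_two hn] <;> ring

theorem η_mul_η (hn : n % 4 = 2) : η (-n) * η (-n) = η (-n) - (n / 4 + 1) • 1 := by
  ext <;> simp [η, natCast_eq_of_mod_four_eq_two hn] <;> ring

theorem quadSpan_eq_span :
    quadSpan ![1, i c, ω c, η c] = Submodule.span ℤ {1, i c, ω c, η c} :=
  rfl

theorem basis_mul_basis_mem_span (hn : n % 4 = 2) :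
    ∀ a ∈ ({1, i (-n), ω (-n), η (-n)} : Set ℍ[ℚ, -1, -(n : ℚ)]),
    ∀ b ∈ ({1, i (-n), ω (-n), η (-n)} : Set ℍ[ℚ, -1, -(n : ℚ)]),
      a * b ∈ Submodule.span ℤ {1, i (-n), ω (-n), η (-n)} := by
  have hgen : ({1, i (-n), ω (-n), η (-n)} : Set ℍ[ℚ, -1, -(n : ℚ)]) ⊆
      Submodule.span ℤ {1, i (-n), ω (-n), η (-n)} := Submodule.subset_span
  simp only [Set.insert_subset_iff, Set.singleton_subset_iff, SetLike.mem_coe] at hgen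
  obtain ⟨h1, hi, hω, hη⟩ := hgen
  rintro _ (rfl | rfl | rfl | rfl) _ (rfl | rfl | rfl | rfl) <;>
    simp only [one_mul, mul_one, i_mul_i, i_mul_ω, i_mul_η, ω_mul_i, η_mul_i,
      ω_mul_ω hn, ω_mul_η hn, η_mul_ω hn, η_mul_η hn] <;>
    apply_rules [Submodule.add_mem, Submodule.sub_mem, Submodule.neg_mem,
      Submodule.smul_of_tower_mem]

end HurwitzOrder

theorem stmt_4_general (n : ℕ) (hn4 : n % 4 = 2)
    (i j k : ℍ[ℚ, (-1 : ℚ), -(n : ℚ)])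
    (hi : i = ⟨0, 1, 0, 0⟩) (hj : j = ⟨0, 0, 1, 0⟩) (hk : k = ⟨0, 0, 0, 1⟩)
    (e : Fin 4 → ℍ[ℚ, (-1 : ℚ), -(n : ℚ)])
    (he : e = ![1, i, (2 : ℚ)⁻¹ • (j + k), (2 : ℚ)⁻¹ • (1 + i + k)]) :
    (1 : ℍ[ℚ, (-1 : ℚ), -(n : ℚ)]) ∈ quadSpan e ∧
    (∀ x ∈ quadSpan e, ∀ y ∈ quadSpan e, x * y ∈ quadSpan e) ∧
    e 1 ^ 2 = -1 ∧
    e 2 ^ 2 = algebraMap ℚ ℍ[ℚ, (-1 : ℚ), -(n : ℚ)] (-((n : ℚ) / 2)) ∧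
    (traceGram e).det = -(n : ℚ) ^ 2 := by
  subst hi hj hk he
  rw [HurwitzOrder.basis_eq, HurwitzOrder.quadSpan_eq_span]
  refine ⟨Submodule.subset_span (by simp),
    fun _ hx _ hy =>
      Submodule.mul_mem_span_of_mul_mem (HurwitzOrder.basis_mul_basis_mem_span hn4) hx hy,
    (sq _).trans (HurwitzOrder.i_mul_i _), ?_, ?_⟩
  · simpa [neg_div] using HurwitzOrder.ω_sq (-n)
  · simpa using HurwitzOrder.det_traceGram (-n)

/-- For a positive integer `n ≡ 2 (mod 4)`, in `ℍ[ℚ, −1, −n]` the lattice spanned by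
`1, i, (j+k)/2, (1+i+k)/2` contains `1` and is closed under multiplication, one has
`i² = −1` and `((j+k)/2)² = −n/2`, and the trace Gram matrix has determinant `−n²`. -/
theorem stmt_4 (n : ℕ) (hn : 0 < n) (hn4 : n % 4 = 2)
    (i j k : ℍ[ℚ, (-1 : ℚ), -(n : ℚ)])
    (hi : i = ⟨0, 1, 0, 0⟩) (hj : j = ⟨0, 0, 1, 0⟩) (hk : k = ⟨0, 0, 0, 1⟩)
    (e : Fin 4 → ℍ[ℚ, (-1 : ℚ), -(n : ℚ)])
    (he : e = ![1, i, (2 : ℚ)⁻¹ • (j + k), (2 : ℚ)⁻¹ • (1 + i + k)]) :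
    (1 : ℍ[ℚ, (-1 : ℚ), -(n : ℚ)]) ∈ quadSpan e ∧
    (∀ x ∈ quadSpan e, ∀ y ∈ quadSpan e, x * y ∈ quadSpan e) ∧
    e 1 ^ 2 = -1 ∧
    e 2 ^ 2 = algebraMap ℚ ℍ[ℚ, (-1 : ℚ), -(n : ℚ)] (-((n : ℚ) / 2)) ∧
    (traceGram e).det = -(n : ℚ) ^ 2 :=
  stmt_4_general n hn4 i j k hi hj hk e he
end

section
/- Let a and b be positive integers with a ≡ 3 (mod 4). In B = ℍ[ℚ, −a, −b], set e₀ = 1, e₁ = (1 + i)/2, e₂ = j, e₃ = (j + k)/2. Then the ℤ-submodule of B spanned by e₀, e₁, e₂, e₃ contains 1 and is closed under multiplication (so it is a ℤ-order of B), and the determinant of the trace Gram matrix of (e₀, e₁, e₂, e₃) equals −a²·b² (so the order has reduced discriminant a·b). -/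
open Quaternion

/-!
Put `ω = (1 + i)/2`. Since `a ≡ 3 (mod 4)`, `ω² = ω − (a + 1)/4` has integral coefficients, and
conjugation by `j` acts on `ℤ[ω]` as `ω ↦ 1 − ω`. Hence `ℤ[ω] + ℤ[ω] j`, with basis
`1, ω, j, ωj = (j + k)/2`, is closed under multiplication. Its trace Gram matrix is block diagonal,
with blocks of determinants `−a` and `a b²`.
-/

theorem Submodule.mul_mem_span_range {R A ι : Type*} [CommSemiring R] [Semiring A] [Algebra R A]
    {e : ι → A} (he : ∀ r s, e r * e s ∈ span R (Set.range e)) {x y : A}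
    (hx : x ∈ span R (Set.range e)) (hy : y ∈ span R (Set.range e)) :
    x * y ∈ span R (Set.range e) := by
  have : span R (Set.range e) * span R (Set.range e) ≤ span R (Set.range e) := by
    rw [span_mul_span, span_le, Set.mul_subset_iff]
    rintro _ ⟨r, rfl⟩ _ ⟨s, rfl⟩
    exact he r s
  exact this (mul_mem_mul hx hy)

namespace QuaternionAlgebra

lemma quadSpan_eq_span_range {c₁ c₂ : ℚ} (e : Fin 4 → ℍ[ℚ, c₁, c₂]) :
    quadSpan e = Submodule.span ℤ (Set.range e) := by
  rw [quadSpan]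
  congr 1
  ext
  simp [Fin.exists_fin_succ, eq_comm]

/-- `1, ω, j, ωj` with `ω = (1 + i)/2`. -/
def omegaBasis (a b : ℚ) : Fin 4 → ℍ[ℚ, -a, -b] :=
  ![1, ⟨1 / 2, 1 / 2, 0, 0⟩, ⟨0, 0, 1, 0⟩, ⟨0, 0, 1 / 2, 1 / 2⟩]

/-- Structure constants of `omegaBasis a b` for `a = 4m − 1`, `b = n`, read off from
`ω² = ω − m`, `jω = (1 − ω)j` and `j² = −n`. -/
def omegaBasisMulCoeff (m n : ℤ) : Fin 4 → Fin 4 → Fin 4 → ℤ :=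
  ![![![1, 0, 0, 0], ![0, 1, 0, 0], ![0, 0, 1, 0], ![0, 0, 0, 1]],
    ![![0, 1, 0, 0], ![-m, 1, 0, 0], ![0, 0, 0, 1], ![0, 0, -m, 1]],
    ![![0, 0, 1, 0], ![0, 0, 1, -1], ![-n, 0, 0, 0], ![-n, n, 0, 0]],
    ![![0, 0, 0, 1], ![0, 0, m, 0], ![0, -n, 0, 0], ![-(n * m), 0, 0, 0]]]

lemma omegaBasis_mul_omegaBasis {a b : ℚ} {m n : ℤ} (hm : a + 1 = 4 * m) (hn : b = n)
    (r s : Fin 4) :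
    omegaBasis a b r * omegaBasis a b s =
      ∑ t, omegaBasisMulCoeff m n r s t • omegaBasis a b t := by
  obtain rfl : a = 4 * m - 1 := by linarith
  subst hn
  fin_cases r <;> fin_cases s <;> ext <;>
    simp [omegaBasis, omegaBasisMulCoeff, Fin.sum_univ_four, zsmul_eq_mul] <;> ring

lemma mul_mem_quadSpan_omegaBasis {a b : ℚ} {m n : ℤ} (hm : a + 1 = 4 * m) (hn : b = n)
    {x y : ℍ[ℚ, -a, -b]} (hx : x ∈ quadSpan (omegaBasis a b))
    (hy : y ∈ quadSpan (omegaBasis a b)) : x * y ∈ quadSpan (omegaBasis a b) := by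
  rw [quadSpan_eq_span_range] at *
  refine Submodule.mul_mem_span_range (fun r s => ?_) hx hy
  rw [omegaBasis_mul_omegaBasis hm hn]
  exact Submodule.sum_mem _ fun t _ => Submodule.smul_mem _ _ (Submodule.subset_span ⟨t, rfl⟩)

lemma traceGram_omegaBasis (a b : ℚ) :
    traceGram (omegaBasis a b) =
      !![2, 1, 0, 0;
         1, (1 - a) / 2, 0, 0;
         0, 0, -2 * b, -b;
         0, 0, -b, -(b * (1 + a)) / 2] := by
  ext r s
  fin_cases r <;> fin_cases s <;> simp [traceGram, trd, omegaBasis] <;> ring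

lemma det_traceGram_omegaBasis (a b : ℚ) :
    (traceGram (omegaBasis a b)).det = -(a ^ 2 * b ^ 2) := by
  rw [traceGram_omegaBasis]
  simp [Matrix.det_succ_row_zero, Fin.sum_univ_succ, Fin.succAbove]
  ring

end QuaternionAlgebra

open QuaternionAlgebra in
theorem stmt_7_general (a b : ℕ) (ha4 : a % 4 = 3)
    (i j k : ℍ[ℚ, -(a : ℚ), -(b : ℚ)])
    (hi : i = ⟨0, 1, 0, 0⟩) (hj : j = ⟨0, 0, 1, 0⟩) (hk : k = ⟨0, 0, 0, 1⟩)
    (e : Fin 4 → ℍ[ℚ, -(a : ℚ), -(b : ℚ)])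
    (he : e = ![1, (2 : ℚ)⁻¹ • (1 + i), j, (2 : ℚ)⁻¹ • (j + k)]) :
    (1 : ℍ[ℚ, -(a : ℚ), -(b : ℚ)]) ∈ quadSpan e ∧
    (∀ x ∈ quadSpan e, ∀ y ∈ quadSpan e, x * y ∈ quadSpan e) ∧
    (traceGram e).det = -((a : ℚ) ^ 2 * (b : ℚ) ^ 2) := by
  obtain rfl : e = omegaBasis a b := by
    subst hi hj hk he
    ext r : 1
    fin_cases r <;> ext <;> simp [omegaBasis]
  have ha : (a : ℚ) + 1 = 4 * (((a + 1) / 4 : ℕ) : ℤ) := by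
    exact_mod_cast (by omega : a + 1 = 4 * ((a + 1) / 4))
  refine ⟨Submodule.subset_span (by simp [omegaBasis]), fun x hx y hy => ?_,
    det_traceGram_omegaBasis _ _⟩
  exact mul_mem_quadSpan_omegaBasis ha (Int.cast_natCast b).symm hx hy

/-- For positive integers `a`, `b` with `a ≡ 3 (mod 4)`, in `ℍ[ℚ, −a, −b]` the lattice
spanned by `1, (1+i)/2, j, (j+k)/2` contains `1` and is closed under multiplication,
and its trace Gram matrix has determinant `−a²·b²`. -/
theorem stmt_7 (a b : ℕ) (ha : 0 < a) (hb : 0 < b) (ha4 : a % 4 = 3)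
    (i j k : ℍ[ℚ, -(a : ℚ), -(b : ℚ)])
    (hi : i = ⟨0, 1, 0, 0⟩) (hj : j = ⟨0, 0, 1, 0⟩) (hk : k = ⟨0, 0, 0, 1⟩)
    (e : Fin 4 → ℍ[ℚ, -(a : ℚ), -(b : ℚ)])
    (he : e = ![1, (2 : ℚ)⁻¹ • (1 + i), j, (2 : ℚ)⁻¹ • (j + k)]) :
    (1 : ℍ[ℚ, -(a : ℚ), -(b : ℚ)]) ∈ quadSpan e ∧
    (∀ x ∈ quadSpan e, ∀ y ∈ quadSpan e, x * y ∈ quadSpan e) ∧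
    (traceGram e).det = -((a : ℚ) ^ 2 * (b : ℚ) ^ 2) :=
  stmt_7_general a b ha4 i j k hi hj hk e he
end

section
/- Let a and b be rational numbers, let q and d be positive rational numbers, and let ω₁, ω₂ ∈ B = ℍ[ℚ, a, b] satisfy ω₁² = −q·1 and ω₂² = −d·1. Put s := trd(ω₁·ω₂) = 2·(ω₁·ω₂).re. Then the determinant of the trace Gram matrix of the quadruple (1, ω₁, ω₂, ω₁·ω₂) equals −(4·q·d − s²)². -/
open Quaternion

/-!
Since `q, d > 0`, the elements `ω₁, ω₂` are pure (their real parts vanish), so the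
anticommutator `ω₁ω₂ + ω₂ω₁` is the scalar `s`. Together with `ω₁² = -q`, `ω₂² = -d` this gives
the multiplication table of `1, ω₁, ω₂, ω₁ω₂`, and the trace Gram matrix splits into the block
`[[2, s], [s, s² - 2qd]]` on `(1, ω₁ω₂)` and the block `[[-2q, s], [s, -2d]]` on `(ω₁, ω₂)`,
of determinants `s² - 4qd` and `4qd - s²`.
-/

namespace QuaternionAlgebra

variable {R : Type*}

theorem re_eq_zero_of_sq_eq_algebraMap_neg [Field R] [LinearOrder R] [IsStrictOrderedRing R]
    {c₁ c₂ q : R} {x : ℍ[R, c₁, c₂]} (hq : 0 < q) (hx : x ^ 2 = algebraMap R _ (-q)) :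
    x.re = 0 := by
  by_contra hre
  have hre2 : 2 * x.re ≠ 0 := by simpa using hre
  -- the imaginary components of `x ^ 2` are `2 * x.re` times those of `x`
  have hx_eq : x = algebraMap R _ x.re := by
    have hI := congrArg imI hx
    have hJ := congrArg imJ hx
    have hK := congrArg imK hx
    simp only [sq, imI_mul, imJ_mul, imK_mul, zero_mul, add_zero, algebraMap_eq] at hI hJ hK
    ext <;> simp only [algebraMap_eq]
    · exact (mul_eq_zero.1 (by linear_combination hI)).resolve_left hre2
    · exact (mul_eq_zero.1 (by linear_combination hJ)).resolve_left hre2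
    · exact (mul_eq_zero.1 (by linear_combination hK)).resolve_left hre2
  have hre_sq := congrArg re hx
  rw [hx_eq, ← map_pow] at hre_sq
  simp only [algebraMap_eq] at hre_sq
  nlinarith [sq_nonneg x.re]

theorem mul_add_mul_swap_of_re_eq_zero [CommRing R] {c₁ c₂ : R} {x y : ℍ[R, c₁, c₂]}
    (hx : x.re = 0) (hy : y.re = 0) : x * y + y * x = algebraMap R _ (2 * (x * y).re) := by
  ext <;>
    simp only [re_add, imI_add, imJ_add, imK_add, re_mul, imI_mul, imJ_mul, imK_mul, hx, hy,
      algebraMap_eq, mul_zero, zero_mul, add_zero, zero_add, zero_sub] <;>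
    ring

end QuaternionAlgebra

section MultiplicationTable

variable {R A : Type*} [CommRing R] [Ring A] [Algebra R A] {q d s : R} {x y : A}

theorem self_mul_mul_of_sq_eq_algebraMap (hx : x ^ 2 = algebraMap R A (-q)) :
    x * (x * y) = -q • y := by
  rw [← mul_assoc, ← sq, hx, ← Algebra.smul_def]

theorem mul_mul_self_of_sq_eq_algebraMap (hy : y ^ 2 = algebraMap R A (-d)) :
    x * y * y = -d • x := by
  rw [mul_assoc, ← sq, hy, ← Algebra.commutes, ← Algebra.smul_def]

theorem mul_swap_of_add_eq_algebraMap (hxy : x * y + y * x = algebraMap R A s) :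
    y * x = s • 1 - x * y := by
  rw [Algebra.smul_def, mul_one, ← hxy, add_sub_cancel_left]

theorem mul_mul_swap_right_of_add_eq_algebraMap (hxy : x * y + y * x = algebraMap R A s)
    (hy : y ^ 2 = algebraMap R A (-d)) : y * (x * y) = s • y + d • x := by
  rw [← mul_assoc, mul_swap_of_add_eq_algebraMap hxy, sub_mul,
    mul_mul_self_of_sq_eq_algebraMap hy, smul_mul_assoc, one_mul, neg_smul, sub_neg_eq_add]

theorem mul_mul_swap_left_of_add_eq_algebraMap (hxy : x * y + y * x = algebraMap R A s)
    (hx : x ^ 2 = algebraMap R A (-q)) : x * y * x = s • x + q • y := by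
  rw [mul_assoc, mul_swap_of_add_eq_algebraMap hxy, mul_sub,
    self_mul_mul_of_sq_eq_algebraMap hx, mul_smul_comm, mul_one, neg_smul, sub_neg_eq_add]

theorem mul_sq_of_add_eq_algebraMap (hxy : x * y + y * x = algebraMap R A s)
    (hx : x ^ 2 = algebraMap R A (-q)) (hy : y ^ 2 = algebraMap R A (-d)) :
    (x * y) ^ 2 = s • (x * y) - (q * d) • 1 := by
  rw [sq, mul_assoc, mul_mul_swap_right_of_add_eq_algebraMap hxy hy, mul_add, mul_smul_comm,
    mul_smul_comm, ← sq, hx, Algebra.algebraMap_eq_smul_one, smul_smul, mul_neg, neg_smul,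
    ← sub_eq_add_neg, mul_comm d]

end MultiplicationTable

section ReducedTrace

variable {c₁ c₂ : ℚ}

theorem trd_add (x y : ℍ[ℚ, c₁, c₂]) : trd (x + y) = trd x + trd y := by
  simp only [trd, QuaternionAlgebra.re_add, mul_add]

theorem trd_sub (x y : ℍ[ℚ, c₁, c₂]) : trd (x - y) = trd x - trd y := by
  simp only [trd, QuaternionAlgebra.re_sub, mul_sub]

theorem trd_smul (r : ℚ) (x : ℍ[ℚ, c₁, c₂]) : trd (r • x) = r * trd x := by
  simp only [trd, QuaternionAlgebra.re_smul, smul_eq_mul, mul_left_comm]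

theorem trd_one : trd (1 : ℍ[ℚ, c₁, c₂]) = 2 := by
  simp [trd]

theorem trd_algebraMap (r : ℚ) : trd (algebraMap ℚ ℍ[ℚ, c₁, c₂] r) = 2 * r := by
  simp [trd, QuaternionAlgebra.algebraMap_eq]

theorem traceGram_one_mul_of_re_eq_zero {q d s : ℚ} {x y : ℍ[ℚ, c₁, c₂]} (hx₀ : x.re = 0)
    (hy₀ : y.re = 0) (hx : x ^ 2 = algebraMap ℚ _ (-q)) (hy : y ^ 2 = algebraMap ℚ _ (-d))
    (hs : trd (x * y) = s) :
    traceGram ![1, x, y, x * y] =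
      !![2, 0, 0, s; 0, -(2 * q), s, 0; 0, s, -(2 * d), 0; s, 0, 0, s ^ 2 - 2 * q * d] := by
  have hxy : x * y + y * x = algebraMap ℚ _ s := by
    rw [QuaternionAlgebra.mul_add_mul_swap_of_re_eq_zero hx₀ hy₀, ← hs, trd]
  have hx_trd : trd x = 0 := by rw [trd, hx₀, mul_zero]
  have hy_trd : trd y = 0 := by rw [trd, hy₀, mul_zero]
  ext i j
  fin_cases i <;> fin_cases j <;>
    simp only [traceGram, Fin.zero_eta, Fin.mk_one, Fin.reduceFinMk, Matrix.of_apply,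
      Matrix.cons_val, one_pow, one_mul, mul_one, ← sq, hx, hy,
      mul_swap_of_add_eq_algebraMap hxy, self_mul_mul_of_sq_eq_algebraMap hx,
      mul_mul_self_of_sq_eq_algebraMap hy, mul_mul_swap_right_of_add_eq_algebraMap hxy hy,
      mul_mul_swap_left_of_add_eq_algebraMap hxy hx, mul_sq_of_add_eq_algebraMap hxy hx hy,
      trd_add, trd_sub, trd_smul, trd_one, trd_algebraMap, hx_trd, hy_trd, hs] <;>
    ring

end ReducedTrace

/-- If `ω₁² = −q` and `ω₂² = −d` in `ℍ[ℚ, a, b]` with `q, d > 0`, and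
`s = trd(ω₁·ω₂)`, then the trace Gram matrix of `(1, ω₁, ω₂, ω₁·ω₂)` has
determinant `−(4·q·d − s²)²`. -/
theorem stmt_10 (a b q d : ℚ) (hq : 0 < q) (hd : 0 < d)
    (ω₁ ω₂ : ℍ[ℚ, a, b])
    (hω₁ : ω₁ ^ 2 = algebraMap ℚ ℍ[ℚ, a, b] (-q))
    (hω₂ : ω₂ ^ 2 = algebraMap ℚ ℍ[ℚ, a, b] (-d))
    (s : ℚ) (hs : s = trd (ω₁ * ω₂)) :
    (traceGram ![1, ω₁, ω₂, ω₁ * ω₂]).det = -(4 * q * d - s ^ 2) ^ 2 := by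
  have hre₁ := QuaternionAlgebra.re_eq_zero_of_sq_eq_algebraMap_neg hq hω₁
  have hre₂ := QuaternionAlgebra.re_eq_zero_of_sq_eq_algebraMap_neg hd hω₂
  rw [traceGram_one_mul_of_re_eq_zero hre₁ hre₂ hω₁ hω₂ hs.symm]
  simp [Matrix.det_succ_row_zero, Fin.sum_univ_succ, Fin.succAbove]
  ring
end
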